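/- Let G = ⟨E, t | ∀a ∈ E₋, t a t⁻¹ = τ(a)⟩ be the HNN extension as above, p = [E : E₋], q = [E : E₊], and m : G → ℚ₊* the modular homomorphism associated to E. Then m(t) = q/p and m(a) = 1 for every a ∈ E; in particular the image of m is the cyclic subgroup of ℚ₊* generated by q/p. -/

import Mathlib

open HNNExtension

/-- The conjugate subgroup `gEg⁻¹`. -/
def conjSubgroup {G : Type*} [Group G] (g : G) (E : Subgroup G) : Subgroup G :=
  E.map (MulAut.conj g).toMonoidHom

/-- The modular map `m(g) = [E : E ∩ gEg⁻¹] / [gEg⁻¹ : E ∩ gEg⁻¹]`. -/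
noncomputable def modularMap {G : Type*} [Group G] (E : Subgroup G) (g : G) : ℚ :=
  ((conjSubgroup g E).relIndex E : ℚ) / (E.relIndex (conjSubgroup g E) : ℚ)

/-!
The ratio `r(K, L) = [K : K ∩ L] / [L : K ∩ L]` is invariant under conjugation and satisfies
`r(K, L) r(L, M) = r(K, M)` for commensurable `K, L, M`, so `m(g) = r(E, gEg⁻¹)` is multiplicative
on the commensurator of `E`. By Britton's lemma `E ∩ tEt⁻¹ = E₊ = t E₋ t⁻¹`, so `t` commensurates
`E` with `m(t) = q/p`; elements of `E` normalize `E`, so `m = 1` there. As `E` and `t` generate `G`,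
`m(g) = (q/p)^n` with `n` the exponent sum of `t` in `g`.
-/

open Subgroup
open scoped Pointwise

section IndexRatio

variable {G : Type*} [Group G]

theorem relIndex_map_range_of_injective {H : Type*} [Group H] {f : G →* H}
    (hf : Function.Injective f) (K : Subgroup G) : (K.map f).relIndex f.range = K.index := by
  rw [f.range_eq_map, relIndex_map_map_of_injective _ _ hf, relIndex_top_right]

/-- `[K : K ⊓ L] / [L : K ⊓ L]`; note that `L.relIndex K` is the index of `K ⊓ L` in `K`. -/
noncomputable def indexRatio (K L : Subgroup G) : ℚ :=
  (L.relIndex K : ℚ) / (K.relIndex L : ℚ)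

theorem modularMap_eq_indexRatio (K : Subgroup G) (g : G) :
    modularMap K g = indexRatio K (conjSubgroup g K) := rfl

theorem indexRatio_self (K : Subgroup G) : indexRatio K K = 1 := by
  simp [indexRatio]

theorem indexRatio_comm (K L : Subgroup G) : indexRatio L K = (indexRatio K L)⁻¹ :=
  (inv_div _ _).symm

theorem indexRatio_map_of_injective {H : Type*} [Group H] {f : G →* H}
    (hf : Function.Injective f) (K L : Subgroup G) :
    indexRatio (K.map f) (L.map f) = indexRatio K L := by
  simp only [indexRatio, relIndex_map_map_of_injective _ _ hf]

theorem indexRatio_eq_div_of_le {X K L : Subgroup G} (hX : X ≤ K ⊓ L) (hXK : X.relIndex K ≠ 0) :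
    indexRatio K L = (X.relIndex K : ℚ) / (X.relIndex L : ℚ) := by
  have hK := relIndex_mul_relIndex X (K ⊓ L) K hX inf_le_left
  have hL := relIndex_mul_relIndex X (K ⊓ L) L hX inf_le_right
  have hX0 : (X.relIndex (K ⊓ L) : ℚ) ≠ 0 := by
    exact_mod_cast left_ne_zero_of_mul (hK ▸ hXK)
  rw [indexRatio, ← hK, ← hL, inf_relIndex_left, inf_relIndex_right, Nat.cast_mul, Nat.cast_mul,
    mul_div_mul_left _ _ hX0]

/-- The cocycle identity, computed through the common finite-index subgroup `K ⊓ L ⊓ M`. -/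
theorem indexRatio_mul_indexRatio {K L M : Subgroup G} (hKL : Commensurable K L)
    (hLM : Commensurable L M) : indexRatio K L * indexRatio L M = indexRatio K M := by
  set X := K ⊓ L ⊓ M
  have hXL : X.relIndex L ≠ 0 := by
    rw [← inf_relIndex_right, show X ⊓ L = (K ⊓ L) ⊓ (M ⊓ L) by
      ext; simp only [X, mem_inf]; tauto]
    exact relIndex_inf_ne_zero (inf_relIndex_right K L ▸ hKL.1) (inf_relIndex_right M L ▸ hLM.2)
  have hXK : X.relIndex K ≠ 0 := relIndex_ne_zero_trans hXL hKL.2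
  have hXL' : (X.relIndex L : ℚ) ≠ 0 := by exact_mod_cast hXL
  rw [indexRatio_eq_div_of_le (X := X) inf_le_left hXK,
    indexRatio_eq_div_of_le (X := X) (le_inf (inf_le_left.trans inf_le_right) inf_le_right) hXL,
    indexRatio_eq_div_of_le (X := X) (le_inf (inf_le_left.trans inf_le_left) inf_le_right) hXK,
    div_mul_div_cancel₀ hXL']

end IndexRatio

section ModularMap

variable {G : Type*} [Group G]

theorem conjSubgroup_eq_smul (g : G) (K : Subgroup G) :
    conjSubgroup g K = MulAut.conj g • K := rfl

theorem conjSubgroup_mul (g h : G) (K : Subgroup G) :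
    conjSubgroup (g * h) K = conjSubgroup g (conjSubgroup h K) := by
  simp only [conjSubgroup_eq_smul, map_mul, mul_smul]

theorem conjSubgroup_inv_conjSubgroup (g : G) (K : Subgroup G) :
    conjSubgroup g (conjSubgroup g⁻¹ K) = K := by
  rw [← conjSubgroup_mul, mul_inv_cancel, conjSubgroup_eq_smul, map_one, one_smul]

theorem indexRatio_conjSubgroup (g : G) (K L : Subgroup G) :
    indexRatio (conjSubgroup g K) (conjSubgroup g L) = indexRatio K L :=
  indexRatio_map_of_injective (MulAut.conj g).injective K L

theorem mem_commensurator_iff {K : Subgroup G} {g : G} :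
    g ∈ Commensurable.commensurator K ↔ Commensurable (conjSubgroup g K) K := Iff.rfl

theorem modularMap_of_mem {K : Subgroup G} {g : G} (hg : g ∈ K) : modularMap K g = 1 := by
  rw [modularMap_eq_indexRatio, conjSubgroup_eq_smul, conj_smul_eq_self_of_mem hg,
    indexRatio_self]

theorem modularMap_mul {K : Subgroup G} {g h : G} (hg : g ∈ Commensurable.commensurator K)
    (hh : h ∈ Commensurable.commensurator K) :
    modularMap K (g * h) = modularMap K g * modularMap K h := by
  have hgK : Commensurable K (conjSubgroup g K) := hg.symm
  have hgh : Commensurable (conjSubgroup g K) (conjSubgroup g (conjSubgroup h K)) :=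
    (hh.conj (ConjAct.toConjAct g)).symm
  rw [modularMap_eq_indexRatio, conjSubgroup_mul, ← indexRatio_mul_indexRatio hgK hgh,
    indexRatio_conjSubgroup]
  rfl

theorem modularMap_inv (K : Subgroup G) (g : G) : modularMap K g⁻¹ = (modularMap K g)⁻¹ := by
  rw [modularMap_eq_indexRatio, ← indexRatio_conjSubgroup g, conjSubgroup_inv_conjSubgroup,
    indexRatio_comm]
  rfl

end ModularMap

namespace HNNExtension

variable {G : Type*} [Group G] {A B : Subgroup G} (φ : A ≃* B)

def tExponentSum : HNNExtension G A B φ →* Multiplicative ℤ :=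
  lift 1 (Multiplicative.ofAdd 1) (by simp)

@[simp]
theorem tExponentSum_t : tExponentSum φ t = Multiplicative.ofAdd 1 := lift_t ..

@[simp]
theorem tExponentSum_of (g : G) : tExponentSum φ (of g) = 1 := lift_of ..

theorem conjSubgroup_t_map_of :
    conjSubgroup (t : HNNExtension G A B φ) (A.map of) = B.map of := by
  apply le_antisymm
  · rintro _ ⟨_, ⟨a, ha, rfl⟩, rfl⟩
    exact ⟨φ ⟨a, ha⟩, (φ ⟨a, ha⟩).2, equiv_eq_conj _⟩
  · rintro _ ⟨b, hb, rfl⟩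
    refine ⟨of (φ.symm ⟨b, hb⟩ : G), ⟨_, (φ.symm ⟨b, hb⟩).2, rfl⟩, ?_⟩
    simpa using (equiv_eq_conj (φ := φ) (φ.symm ⟨b, hb⟩)).symm

/-- Britton's lemma applied to the reduced word `t g t⁻¹`. -/
theorem mem_of_t_conj_mem_range {g : G}
    (hg : t * of g * t⁻¹ ∈ (of : G →* HNNExtension G A B φ).range) : g ∈ A := by
  by_contra hgA
  let w : NormalWord.ReducedWord G A B :=
    ⟨1, [(1, g), (-1, 1)], List.isChain_cons_cons.mpr ⟨fun h => absurd h hgA,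
      List.isChain_singleton _⟩⟩
  have hw : w.prod φ = t * of g * t⁻¹ := by
    simp [w, NormalWord.ReducedWord.prod, mul_assoc]
  have := ReducedWord.toList_eq_nil_of_mem_of_range φ w (hw ▸ hg)
  simp [w] at this

theorem range_of_inf_conjSubgroup_t :
    (of : G →* HNNExtension G A B φ).range ⊓ conjSubgroup t (of : G →* HNNExtension G A B φ).range
      = B.map of := by
  apply le_antisymm
  · rintro _ ⟨hx, _, ⟨g, rfl⟩, rfl⟩
    have hg : g ∈ A := mem_of_t_conj_mem_range φ hx
    exact ⟨φ ⟨g, hg⟩, (φ ⟨g, hg⟩).2, equiv_eq_conj _⟩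
  · rw [← conjSubgroup_t_map_of φ]
    exact le_inf ((conjSubgroup_t_map_of φ).symm ▸ map_le_range _ _)
      (map_mono (map_le_range _ _))

theorem relIndex_conjSubgroup_t_range_of :
    (conjSubgroup t (of : G →* HNNExtension G A B φ).range).relIndex of.range = B.index := by
  rw [← inf_relIndex_right, inf_comm, range_of_inf_conjSubgroup_t,
    relIndex_map_range_of_injective (of_injective φ)]

theorem relIndex_range_of_conjSubgroup_t :
    (of : G →* HNNExtension G A B φ).range.relIndex (conjSubgroup t of.range) = A.index := by
  rw [← inf_relIndex_right, range_of_inf_conjSubgroup_t, ← conjSubgroup_t_map_of,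
    conjSubgroup, conjSubgroup, relIndex_map_map_of_injective _ _ (MulAut.conj _).injective,
    relIndex_map_range_of_injective (of_injective φ)]

theorem modularMap_range_of_t :
    modularMap (of : G →* HNNExtension G A B φ).range t = (B.index : ℚ) / (A.index : ℚ) := by
  rw [modularMap, relIndex_conjSubgroup_t_range_of, relIndex_range_of_conjSubgroup_t]

theorem modularMap_range_of_of (g : G) :
    modularMap (of : G →* HNNExtension G A B φ).range (of g) = 1 :=
  modularMap_of_mem ⟨g, rfl⟩

variable {φ}

theorem mem_commensurator_range_of (hA : A.index ≠ 0) (hB : B.index ≠ 0)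
    (x : HNNExtension G A B φ) : x ∈ Commensurable.commensurator (of : G →* _).range := by
  induction x using induction_on with
  | of g =>
    rw [mem_commensurator_iff, conjSubgroup_eq_smul,
      conj_smul_eq_self_of_mem (MonoidHom.mem_range.2 ⟨g, rfl⟩)]
  | t =>
    exact mem_commensurator_iff.2
      ⟨relIndex_conjSubgroup_t_range_of φ ▸ hB, relIndex_range_of_conjSubgroup_t φ ▸ hA⟩
  | mul x y hx hy => exact mul_mem hx hy
  | inv x hx => exact inv_mem hx

theorem modularMap_range_of_eq_zpow (hA : A.index ≠ 0) (hB : B.index ≠ 0)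
    (x : HNNExtension G A B φ) :
    modularMap (of : G →* _).range x =
      ((B.index : ℚ) / (A.index : ℚ)) ^ (Multiplicative.toAdd (tExponentSum φ x)) := by
  have hr : (B.index : ℚ) / (A.index : ℚ) ≠ 0 := by positivity
  induction x using induction_on with
  | of g => simp [modularMap_range_of_of]
  | t => simp [modularMap_range_of_t]
  | mul x y hx hy =>
    rw [modularMap_mul (mem_commensurator_range_of hA hB x) (mem_commensurator_range_of hA hB y),
      hx, hy, map_mul, toAdd_mul, zpow_add₀ hr]
  | inv x hx => rw [modularMap_inv, hx, map_inv, toAdd_inv, zpow_neg]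

end HNNExtension

theorem hnn_modularMap_general {E : Type*} [Group E] (Em Ep : Subgroup E)
    (hEm : Em.index ≠ 0) (hEp : Ep.index ≠ 0)
    (τ : Em ≃* Ep) :
    modularMap (HNNExtension.of (φ := τ)).range (HNNExtension.t (φ := τ)) =
        (Ep.index : ℚ) / (Em.index : ℚ) ∧
    (∀ a : E, modularMap (HNNExtension.of (φ := τ)).range (HNNExtension.of a) = 1) ∧
    Set.range (modularMap (HNNExtension.of (φ := τ)).range) =
        Set.range (fun n : ℤ => ((Ep.index : ℚ) / (Em.index : ℚ)) ^ n) := by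
  refine ⟨modularMap_range_of_t τ, modularMap_range_of_of τ, ?_⟩
  ext r
  constructor
  · rintro ⟨x, rfl⟩
    exact ⟨_, (modularMap_range_of_eq_zpow hEm hEp x).symm⟩
  · rintro ⟨n, rfl⟩
    refine ⟨t ^ n, ?_⟩
    simp [modularMap_range_of_eq_zpow hEm hEp]

/-- Let `G = ⟨E, t ∣ ∀ a ∈ E₋, t a t⁻¹ = τ(a)⟩` be an HNN extension with `E₋, E₊` of finite
index `p = [E : E₋]`, `q = [E : E₊]` in `E`, and let `m` be the modular map associated to (the
image of) `E`.  Then `m(t) = q/p`, `m(a) = 1` for every `a ∈ E`, and the image of `m` is the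
cyclic subgroup of `ℚ₊*` generated by `q/p`. -/
theorem hnn_modularMap {E : Type*} [Group E] (Em Ep : Subgroup E)
    [Em.Normal] [Ep.Normal] (hEm : Em.index ≠ 0) (hEp : Ep.index ≠ 0)
    (τ : Em ≃* Ep) :
    modularMap (HNNExtension.of (φ := τ)).range (HNNExtension.t (φ := τ)) =
        (Ep.index : ℚ) / (Em.index : ℚ) ∧
    (∀ a : E, modularMap (HNNExtension.of (φ := τ)).range (HNNExtension.of a) = 1) ∧
    Set.range (modularMap (HNNExtension.of (φ := τ)).range) =
        Set.range (fun n : ℤ => ((Ep.index : ℚ) / (Em.index : ℚ)) ^ n) :=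
  hnn_modularMap_general Em Ep hEm hEp τ
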